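/- Let k : (0,∞) → (0,∞) be measurable with 1/(t k(t)) locally integrable on (0,∞), and let Y : (0,∞) × ℝⁿ → [0,1] satisfy: for each ξ, t ↦ Y(t,ξ) is differentiable and nonincreasing with Y(0⁺,ξ) = 1, and −t k(t) ∂_t Y(t,ξ) ≤ |ξ|² Y(t,ξ) for all t > 0. Suppose h̃ : [0,∞) × ℝⁿ → ℂ satisfies |h̃(t,ξ)| ≤ q(ξ) for all t, ξ. Define ũ(t,ξ) = −(1/|ξ|²) ∫₀ᵗ h̃(s,ξ) ∂_s Y(t−s,ξ) ds for ξ ≠ 0. Then |ũ(t,ξ)| ≤ q(ξ) ∫₀ᵗ 1/(s k(s)) ds for all t > 0 and ξ ≠ 0. -/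

import Mathlib

/-!
Since `Y ≤ 1` and `Y` is nonincreasing in `t`, the hypothesis `-t k(t) ∂ₜY ≤ |ξ|² Y` gives
`|∂ₜY(τ, ξ)| ≤ |ξ|² / (τ k(τ))`. After the substitution `τ = t - s` the Duhamel integral is then
bounded by `q(ξ) |ξ|² ∫₀ᵗ dτ / (τ k(τ))`, and the prefactor `1 / |ξ|²` cancels `|ξ|²`.
-/

open MeasureTheory Set Filter

lemma abs_le_div_of_neg_mul_le {y' y c a : ℝ} (ha : 0 < a) (hc : 0 ≤ c) (hy' : y' ≤ 0)
    (hy : y ≤ 1) (h : -a * y' ≤ c * y) : |y'| ≤ c * (1 / a) := by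
  rw [abs_of_nonpos hy', mul_one_div, le_div_iff₀ ha]
  nlinarith

lemma norm_integral_mul_comp_sub_le {f : ℝ → ℂ} {g w : ℝ → ℝ} {q t : ℝ} (ht : 0 ≤ t)
    (hf : ∀ s ∈ Ico 0 t, ‖f s‖ ≤ q) (hg : ∀ τ ∈ Ioc 0 t, |g τ| ≤ w τ)
    (hw : IntervalIntegrable w volume 0 t) :
    ‖∫ s in (0:ℝ)..t, f s * (g (t - s) : ℂ)‖ ≤ q * ∫ τ in (0:ℝ)..t, w τ := by
  have hsub : ∫ s in (0:ℝ)..t, f s * (g (t - s) : ℂ) = ∫ τ in (0:ℝ)..t, f (t - τ) * (g τ : ℂ) := by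
    simpa using intervalIntegral.integral_comp_sub_left (fun τ => f (t - τ) * (g τ : ℂ)) t
      (a := 0) (b := t)
  rw [hsub, ← intervalIntegral.integral_const_mul]
  refine intervalIntegral.norm_integral_le_of_norm_le ht (ae_of_all _ fun τ hτ => ?_)
    (hw.const_mul q)
  have hfτ : ‖f (t - τ)‖ ≤ q := hf _ ⟨sub_nonneg.2 hτ.2, sub_lt_self _ hτ.1⟩
  rw [norm_mul, Complex.norm_real, Real.norm_eq_abs]
  exact mul_le_mul hfτ (hg τ hτ) (abs_nonneg _) ((norm_nonneg _).trans hfτ)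

theorem stmt_11_general (n : ℕ) (k : ℝ → ℝ)
    (hkpos : ∀ t > 0, 0 < k t)
    (hkint : ∀ T > 0, IntegrableOn (fun s => 1 / (s * k s)) (Ioc 0 T))
    (Y Y' : ℝ → EuclideanSpace ℝ (Fin n) → ℝ)
    (hYbd : ∀ ξ, ∀ t > 0, 0 ≤ Y t ξ ∧ Y t ξ ≤ 1)
    (hYder : ∀ ξ, ∀ t > 0, HasDerivAt (fun t => Y t ξ) (Y' t ξ) t)
    (hYanti : ∀ ξ, AntitoneOn (fun t => Y t ξ) (Ioi 0))
    (hYineq : ∀ ξ, ∀ t > 0, -(t * k t) * Y' t ξ ≤ ‖ξ‖ ^ 2 * Y t ξ)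
    (h_tilde : ℝ → EuclideanSpace ℝ (Fin n) → ℂ)
    (q : EuclideanSpace ℝ (Fin n) → ℝ)
    (hhq : ∀ t ≥ 0, ∀ ξ, ‖h_tilde t ξ‖ ≤ q ξ)
    (u_tilde : ℝ → EuclideanSpace ℝ (Fin n) → ℂ)
    (hu : ∀ t, ∀ ξ, ξ ≠ 0 →
      u_tilde t ξ = -(1 / (‖ξ‖ ^ 2 : ℂ)) *
        ∫ s in (0:ℝ)..t, h_tilde s ξ * (Y' (t - s) ξ : ℂ)) :
    ∀ t > 0, ∀ ξ, ξ ≠ 0 →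
      ‖u_tilde t ξ‖ ≤ q ξ * ∫ s in (0:ℝ)..t, 1 / (s * k s) := by
  intro t ht ξ hξ
  have hξ2 : 0 < ‖ξ‖ ^ 2 := by positivity
  have hY'bound : ∀ τ ∈ Ioc 0 t, |Y' τ ξ| ≤ ‖ξ‖ ^ 2 * (1 / (τ * k τ)) := fun τ hτ =>
    abs_le_div_of_neg_mul_le (mul_pos hτ.1 (hkpos τ hτ.1)) hξ2.le
      ((hYder ξ τ hτ.1).hasDerivWithinAt.nonpos_of_antitoneOn
        (uniqueDiffWithinAt_iff_accPt.mp (isOpen_Ioi.uniqueDiffWithinAt hτ.1)) (hYanti ξ))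
      (hYbd ξ τ hτ.1).2 (hYineq ξ τ hτ.1)
  have hint : IntervalIntegrable (fun τ => 1 / (τ * k τ)) volume 0 t :=
    (intervalIntegrable_iff_integrableOn_Ioc_of_le ht.le).mpr (hkint t ht)
  have hduhamel := norm_integral_mul_comp_sub_le ht.le (fun s hs => hhq s hs.1 ξ) hY'bound
    (hint.const_mul _)
  rw [intervalIntegral.integral_const_mul] at hduhamel
  rw [hu t ξ hξ, norm_mul, norm_neg, norm_div, norm_one, norm_pow, Complex.norm_real, norm_norm]
  calc 1 / ‖ξ‖ ^ 2 * ‖∫ s in (0:ℝ)..t, h_tilde s ξ * (Y' (t - s) ξ : ℂ)‖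
      ≤ 1 / ‖ξ‖ ^ 2 * (q ξ * (‖ξ‖ ^ 2 * ∫ τ in (0:ℝ)..t, 1 / (τ * k τ))) := by gcongr
    _ = q ξ * ∫ τ in (0:ℝ)..t, 1 / (τ * k τ) := by field_simp

theorem stmt_11 (n : ℕ) (k : ℝ → ℝ)
    (hkpos : ∀ t > 0, 0 < k t)
    (hkint : ∀ T > 0, IntegrableOn (fun s => 1 / (s * k s)) (Ioc 0 T))
    (Y Y' : ℝ → EuclideanSpace ℝ (Fin n) → ℝ)
    (hYbd : ∀ ξ, ∀ t > 0, 0 ≤ Y t ξ ∧ Y t ξ ≤ 1)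
    (hYder : ∀ ξ, ∀ t > 0, HasDerivAt (fun t => Y t ξ) (Y' t ξ) t)
    (hYanti : ∀ ξ, AntitoneOn (fun t => Y t ξ) (Ioi 0))
    (hY0 : ∀ ξ, Tendsto (fun t => Y t ξ) (nhdsWithin 0 (Ioi 0)) (nhds 1))
    (hYineq : ∀ ξ, ∀ t > 0, -(t * k t) * Y' t ξ ≤ ‖ξ‖ ^ 2 * Y t ξ)
    (h_tilde : ℝ → EuclideanSpace ℝ (Fin n) → ℂ)
    (q : EuclideanSpace ℝ (Fin n) → ℝ)
    (hhq : ∀ t ≥ 0, ∀ ξ, ‖h_tilde t ξ‖ ≤ q ξ)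
    (u_tilde : ℝ → EuclideanSpace ℝ (Fin n) → ℂ)
    (hu : ∀ t, ∀ ξ, ξ ≠ 0 →
      u_tilde t ξ = -(1 / (‖ξ‖ ^ 2 : ℂ)) *
        ∫ s in (0:ℝ)..t, h_tilde s ξ * (Y' (t - s) ξ : ℂ)) :
    ∀ t > 0, ∀ ξ, ξ ≠ 0 →
      ‖u_tilde t ξ‖ ≤ q ξ * ∫ s in (0:ℝ)..t, 1 / (s * k s) :=
  stmt_11_general n k hkpos hkint Y Y' hYbd hYder hYanti hYineq h_tilde q hhq u_tilde hu
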